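/- Under the hypotheses of the Lie-algebra characterization of Tr-IMM: if μ_1 and μ_2 are path monomials differing only in the shared middle index between positions k and k+1 (μ_1 uses i_{k+1}, μ_2 uses i'_{k+1}, with all other indices equal), then their coefficients in f are equal. -/

import Mathlib

/-!
For `p = idx (k + 1)` and `q = i'`, the Lie algebra condition for `Bmat k (E_{p,q})` is the identity
`∑ᵢ x^{(k)}_{i,p} ∂f/∂x^{(k)}_{i,q} = ∑ⱼ x^{(k+1)}_{q,j} ∂f/∂x^{(k+1)}_{p,j}`.
Compare the coefficients of the monomial `ν` obtained from `μ₁` by replacing `x^{(k+1)}_{p,i_{k+2}}`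
with `x^{(k+1)}_{q,i_{k+2}}`: since `ν` uses exactly one variable of each layer, exactly one term on
each side contributes, namely `coeff μ₂ f` on the left and `coeff μ₁ f` on the right.
-/

open Matrix MvPolynomial

/-- The `k`-th symbolic matrix `Q_k` of `Tr-IMM_{w,d}`. -/
noncomputable def symQ (F : Type*) [Field F] (w d : ℕ) (k : Fin d) :
    Matrix (Fin w) (Fin w) (MvPolynomial (Fin d × Fin w × Fin w) F) :=
  fun i j => MvPolynomial.X (k, i, j)

/-- `Tr-IMM_{w,d} = tr(Q_0 Q_1 ⋯ Q_{d-1})`. -/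
noncomputable def trIMM (F : Type*) [Field F] (w d : ℕ) :
    MvPolynomial (Fin d × Fin w × Fin w) F :=
  Matrix.trace (((List.finRange d).map (symQ F w d)).prod)

/-- The Lie algebra of a polynomial `f`. -/
def lieAlg {F : Type*} [Field F] {σ : Type*} [Fintype σ] [DecidableEq σ]
    (f : MvPolynomial σ F) : Set (Matrix σ σ F) :=
  {E | ∑ i : σ, ∑ j : σ, E i j • (MvPolynomial.X j * MvPolynomial.pderiv i f) = 0}

/-- The block-diagonal matrix of the space `B_k` associated to `M ∈ M_w(F)`:
the row indexed by `x^{(k)}_{i,j}` carries the linear form `(Q_k · M)_{i,j}` and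
the row indexed by `x^{(k+1)}_{i,j}` carries `(−M · Q_{k+1})_{i,j}` (this is the
coordinate form of `diag(I_w ⊗ Mᵀ, −I_w ⊗ M)` and its variants under the
paper's variable ordering). -/
def Bmat (F : Type*) [Field F] (w d : ℕ) [NeZero d] (k : Fin d)
    (M : Matrix (Fin w) (Fin w) F) :
    Matrix (Fin d × Fin w × Fin w) (Fin d × Fin w × Fin w) F :=
  fun a b =>
    if a.1 = k ∧ b.1 = k then (if a.2.1 = b.2.1 then M b.2.2 a.2.2 else 0)
    else if a.1 = k + 1 ∧ b.1 = k + 1 then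
      (if a.2.2 = b.2.2 then - M a.2.1 b.2.1 else 0)
    else 0

open Function

/-- The exponent of `∏ₗ x⁽ˡ⁾_{g l}`; the path monomial of `idx` is
`edgeMonomial (cycleEdges idx)`. -/
noncomputable def edgeMonomial {ι κ : Type*} [Fintype ι] (g : ι → κ) : ι × κ →₀ ℕ :=
  ∑ l, Finsupp.single (l, g l) 1

section edgeMonomial

variable {ι κ : Type*} [Fintype ι] [DecidableEq ι] [DecidableEq κ]

theorem edgeMonomial_apply (g : ι → κ) (l : ι) (y : κ) :
    edgeMonomial g (l, y) = if g l = y then 1 else 0 := by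
  simp [edgeMonomial, Finsupp.finsetSum_apply, Finsupp.single_apply, ite_and]

theorem edgeMonomial_sub_single_add_single (g : ι → κ) (t : ι) (v : κ) :
    edgeMonomial g - Finsupp.single (t, g t) 1 + Finsupp.single (t, v) 1 =
      edgeMonomial (update g t v) := by
  ext ⟨l, y⟩
  simp only [Finsupp.add_apply, Finsupp.tsub_apply, edgeMonomial_apply, Finsupp.single_apply,
    Prod.mk.injEq]
  by_cases hl : l = t
  · subst hl
    by_cases h1 : g l = y <;> by_cases h2 : v = y <;> simp [h1, h2]
  · simp [Ne.symm hl, update_of_ne hl]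

theorem coeff_edgeMonomial_X_mul_pderiv {R : Type*} [CommSemiring R] (g : ι → κ) (t : ι)
    (u v : κ) (f : MvPolynomial (ι × κ) R) :
    coeff (edgeMonomial g) (X (t, u) * pderiv (t, v) f) =
      if g t = u then coeff (edgeMonomial (update g t v)) f else 0 := by
  rw [coeff_X_mul']
  by_cases hu : g t = u
  · subst hu
    rw [if_pos (by simp [edgeMonomial_apply]), if_pos rfl]
    have hzero : (edgeMonomial g - Finsupp.single (t, g t) 1 : ι × κ →₀ ℕ) (t, v) = 0 := by
      by_cases hv : g t = v <;> simp [edgeMonomial_apply, hv]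
    simp [coeff_pderiv, hzero, edgeMonomial_sub_single_add_single]
  · simp [edgeMonomial_apply, hu]

end edgeMonomial

theorem Fin.add_one_ne_self {d : ℕ} [NeZero d] (hd : d ≠ 1) (k : Fin d) : k + 1 ≠ k := by
  obtain ⟨n, rfl⟩ := Nat.exists_eq_succ_of_ne_zero (NeZero.ne d)
  rw [Ne, add_eq_left, Fin.one_eq_zero_iff]
  omega

def cycleEdges {d w : ℕ} [NeZero d] (idx : Fin d → Fin w) : Fin d → Fin w × Fin w :=
  fun l => (idx l, idx (l + 1))

theorem cycleEdges_update_add_one {d w : ℕ} [NeZero d] {k : Fin d} (hk : k + 1 ≠ k)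
    (idx : Fin d → Fin w) (v : Fin w) :
    cycleEdges (update idx (k + 1) v) =
      update (update (cycleEdges idx) (k + 1) (v, idx (k + 1 + 1))) k (idx k, v) := by
  have hk' : k + 1 + 1 ≠ k + 1 := by simpa using hk
  ext l : 1
  by_cases hl : l = k
  · subst hl
    simp [cycleEdges, update_of_ne hk.symm]
  by_cases hl' : l = k + 1
  · subst hl'
    simp [cycleEdges, hk, hk']
  · have : l + 1 ≠ k + 1 := fun h => hl (add_right_cancel h)
    simp [cycleEdges, hl, hl', this]

section Bmat

variable (F : Type*) [Field F] (w d : ℕ) [NeZero d] {k : Fin d}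

theorem sum_sum_Bmat_smul (hk : k + 1 ≠ k) {V : Type*} [AddCommGroup V] [Module F V]
    (M : Matrix (Fin w) (Fin w) F) (T : Fin d × Fin w × Fin w → Fin d × Fin w × Fin w → V) :
    ∑ a, ∑ b, Bmat F w d k M a b • T a b =
      ∑ i, ∑ j, ∑ j', M j' j • T (k, i, j) (k, i, j') -
        ∑ i, ∑ j, ∑ i', M i i' • T (k + 1, i, j) (k + 1, i', j) := by
  have hB : ∀ a b, Bmat F w d k M a b =
      (if a.1 = k ∧ b.1 = k then (if a.2.1 = b.2.1 then M b.2.2 a.2.2 else 0) else 0) -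
      (if a.1 = k + 1 ∧ b.1 = k + 1 then (if a.2.2 = b.2.2 then M a.2.1 b.2.1 else 0) else 0) := by
    intro a b
    by_cases h : a.1 = k + 1
    · simp only [Bmat, h, hk, false_and, if_false, true_and, zero_sub]
      split_ifs <;> simp
    · simp [Bmat, h]
  simp only [hB, sub_smul, Finset.sum_sub_distrib, Fintype.sum_prod_type, ite_smul, zero_smul,
    ite_and, Finset.sum_ite_irrel, Finset.sum_const_zero, Finset.sum_ite_eq, Finset.sum_ite_eq',
    Finset.mem_univ, if_true]

theorem Bmat_single_mem_lieAlg_iff (hk : k + 1 ≠ k) (p q : Fin w)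
    (f : MvPolynomial (Fin d × Fin w × Fin w) F) :
    Bmat F w d k (single p q 1) ∈ lieAlg f ↔
      ∑ i, X (k, i, p) * pderiv (k, i, q) f = ∑ j, X (k + 1, q, j) * pderiv (k + 1, p, j) f := by
  simp [lieAlg, sum_sum_Bmat_smul F w d hk, single_apply, ite_and, sub_eq_zero]

end Bmat

theorem stmt17_general (F : Type*) [Field F] (w d : ℕ) [NeZero d] (hd : 3 ≤ d)
    (f : MvPolynomial (Fin d × Fin w × Fin w) F)
    (hB : ∀ (k : Fin d) (M : Matrix (Fin w) (Fin w) F),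
      Bmat F w d k M ∈ lieAlg f)
    (k : Fin d) (idx : Fin d → Fin w) (i' : Fin w) :
    MvPolynomial.coeff
        (∑ l : Fin d,
          Finsupp.single ((l, idx l, idx (l + 1)) : Fin d × Fin w × Fin w) 1) f =
      MvPolynomial.coeff
        (∑ l : Fin d,
          Finsupp.single
            ((l, Function.update idx (k + 1) i' l,
              Function.update idx (k + 1) i' (l + 1)) : Fin d × Fin w × Fin w) 1) f := by
  have hk : k + 1 ≠ k := Fin.add_one_ne_self (by omega) k
  change coeff (edgeMonomial (cycleEdges idx)) f =
    coeff (edgeMonomial (cycleEdges (update idx (k + 1) i'))) f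
  set ν := update (cycleEdges idx) (k + 1) (i', idx (k + 1 + 1))
  have hν : ν k = (idx k, idx (k + 1)) := by simp [ν, cycleEdges, hk.symm]
  have hlie := congrArg (coeff (edgeMonomial ν))
    ((Bmat_single_mem_lieAlg_iff F w d hk (idx (k + 1)) i' f).1 (hB k _))
  simp only [coeff_sum, coeff_edgeMonomial_X_mul_pderiv, hν, ν, update_self, Prod.mk.injEq,
    and_true, true_and, Finset.sum_ite_eq, Finset.mem_univ, if_true, update_idem] at hlie
  have hself : update (cycleEdges idx) (k + 1) (idx (k + 1), idx (k + 1 + 1)) = cycleEdges idx :=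
    update_eq_self (k + 1) _
  rw [← cycleEdges_update_add_one hk, hself] at hlie
  exact hlie.symm

theorem stmt17 (F : Type*) [Field F] (w d : ℕ) [NeZero d] (hw : 2 ≤ w) (hd : 3 ≤ d)
    (f : MvPolynomial (Fin d × Fin w × Fin w) F) (hf0 : f ≠ 0)
    (hsm : ∀ m ∈ f.support, ∀ k : Fin d,
      (∑ i : Fin w, ∑ j : Fin w, m (k, i, j)) = 1)
    (hB : ∀ (k : Fin d) (M : Matrix (Fin w) (Fin w) F),
      Bmat F w d k M ∈ lieAlg f)
    (k : Fin d) (idx : Fin d → Fin w) (i' : Fin w) :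
    MvPolynomial.coeff
        (∑ l : Fin d,
          Finsupp.single ((l, idx l, idx (l + 1)) : Fin d × Fin w × Fin w) 1) f =
      MvPolynomial.coeff
        (∑ l : Fin d,
          Finsupp.single
            ((l, Function.update idx (k + 1) i' l,
              Function.update idx (k + 1) i' (l + 1)) : Fin d × Fin w × Fin w) 1) f :=
  stmt17_general F w d hd f hB k idx i'
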